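/- arXiv:2404.15641 — 9 statements merged into one kernel-verified Lean document; each statement's English description precedes it below -/
import Mathlib

section
/- Let X be a vector lattice with a linear convergence structure. If the convergence is locally full (0 ≤ x_α ≤ y_α for all α and y_α → 0 imply x_α → 0) and the modulus map x ↦ |x| is continuous, then the convergence is locally solid (|y_α| ≤ |x_α| for all α and x_α → 0 imply y_α → 0). -/
open Filter Pointwise

/-- A net convergence structure on `X`: assigns, for every directed preordered
index type, which nets converge to which points. -/
abbrev Conv (X : Type) : Type 1 :=
  ∀ (ι : Type) [Preorder ι] [IsDirected ι (· ≤ ·)] [Nonempty ι], (ι → X) → X → Prop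

/-- `y` is a quasi-subnet of `x`: every tail set of `x` contains a tail set of `y`. -/
def IsQuasiSubnet {X : Type} {ι κ : Type} [Preorder ι] [Preorder κ]
    (y : κ → X) (x : ι → X) : Prop :=
  ∀ i₀ : ι, ∃ k₀ : κ, ∀ k, k₀ ≤ k → ∃ i, i₀ ≤ i ∧ y k = x i

/-- The axioms of a (net) convergence structure. -/
structure IsConvStruct {X : Type} (C : Conv X) : Prop where
  const : ∀ (ι : Type) [Preorder ι] [IsDirected ι (· ≤ ·)] [Nonempty ι] (a : X),
    C ι (fun _ => a) a
  quasi : ∀ (ι κ : Type) [Preorder ι] [IsDirected ι (· ≤ ·)] [Nonempty ι]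
      [Preorder κ] [IsDirected κ (· ≤ ·)] [Nonempty κ]
      (x : ι → X) (y : κ → X) (a : X),
    C ι x a → IsQuasiSubnet y x → C κ y a
  mix : ∀ (ι : Type) [Preorder ι] [IsDirected ι (· ≤ ·)] [Nonempty ι]
      (x y z : ι → X) (a : X),
    C ι x a → C ι y a → (∀ i, z i = x i ∨ z i = y i) → C ι z a

/-- A linear convergence structure: a convergence structure for which the vector
space operations are continuous. -/
structure IsLinearConv {X : Type} [AddCommGroup X] [Module ℝ X] (C : Conv X)
    extends IsConvStruct C : Prop where
  add : ∀ (ι : Type) [Preorder ι] [IsDirected ι (· ≤ ·)] [Nonempty ι]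
      (x y : ι → X) (a b : X),
    C ι x a → C ι y b → C ι (fun i => x i + y i) (a + b)
  smul : ∀ (ι : Type) [Preorder ι] [IsDirected ι (· ≤ ·)] [Nonempty ι]
      (r : ι → ℝ) (x : ι → X) (r₀ : ℝ) (a : X),
    Tendsto r atTop (nhds r₀) → C ι x a → C ι (fun i => r i • x i) (r₀ • a)

/-- Local solidity of a convergence structure on a vector lattice. -/
def LocSolid {X : Type} [AddCommGroup X] [Lattice X] (C : Conv X) : Prop :=
  ∀ (ι : Type) [Preorder ι] [IsDirected ι (· ≤ ·)] [Nonempty ι]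
    (x y : ι → X), (∀ i, |y i| ≤ |x i|) → C ι x 0 → C ι y 0

/-- A convergence structure is Hausdorff when limits are unique. -/
def ConvHausdorff {X : Type} (C : Conv X) : Prop :=
  ∀ (ι : Type) [Preorder ι] [IsDirected ι (· ≤ ·)] [Nonempty ι]
    (x : ι → X) (a b : X), C ι x a → C ι x b → a = b

/-- A product ordered by the first coordinate. -/
def FstOrd (Γ A : Type) : Type := Γ × A

instance FstOrd.pre (Γ A : Type) [Preorder Γ] : Preorder (FstOrd Γ A) :=
  Preorder.lift (fun p : Γ × A => p.1)

instance FstOrd.dir (Γ A : Type) [Preorder Γ] [IsDirected Γ (· ≤ ·)] :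
    IsDirected (FstOrd Γ A) (· ≤ ·) :=
  ⟨fun p q => by
    obtain ⟨c, hc1, hc2⟩ := directed_of (· ≤ · : Γ → Γ → Prop) (Prod.fst p) (Prod.fst q)
    exact ⟨(c, Prod.snd p), hc1, hc2⟩⟩

instance FstOrd.nonempty (Γ A : Type) [Nonempty Γ] [Nonempty A] : Nonempty (FstOrd Γ A) :=
  inferInstanceAs (Nonempty (Γ × A))

/-- Order convergence of a net to `0`: eventual domination by a net decreasing to `0`. -/
def OConvZero {X : Type} [Lattice X] [AddCommGroup X] {ι : Type} [Preorder ι]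
    (z : ι → X) : Prop :=
  ∃ (κ : Type) (_ : Preorder κ) (_ : IsDirected κ (· ≤ ·)) (_ : Nonempty κ)
    (u : κ → X), Antitone u ∧ IsGLB (Set.range u) 0 ∧
      ∀ k, ∃ i₀, ∀ i, i₀ ≤ i → |z i| ≤ u k


/-- Locally full plus continuity of the modulus implies local solidity. -/
theorem stmt1 {X : Type} [AddCommGroup X] [Lattice X]
    [CovariantClass X X (· + ·) (· ≤ ·)] [Module ℝ X] [PosSMulMono ℝ X]
    (C : Conv X) (hC : IsLinearConv C)
    (hfull : ∀ (ι : Type) [Preorder ι] [IsDirected ι (· ≤ ·)] [Nonempty ι]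
      (x y : ι → X), (∀ i, 0 ≤ x i) → (∀ i, x i ≤ y i) → C ι y 0 → C ι x 0)
    (habs : ∀ (ι : Type) [Preorder ι] [IsDirected ι (· ≤ ·)] [Nonempty ι]
      (x : ι → X) (a : X), C ι x a → C ι (fun i => |x i|) |a|) :
    LocSolid C := by
  intro ι _ _ _ x y hle hx
  have habsx : C ι (fun i => |x i|) 0 := by
    have := habs ι x 0 hx
    simpa using this
  -- y⁺ and y⁻ converge to 0
  have hpos : C ι (fun i => y i ⊔ 0) 0 := by
    refine hfull ι _ _ (fun i => le_sup_right) (fun i => ?_) habsx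
    exact sup_le ((le_abs_self _).trans (hle i)) ((abs_nonneg _).trans (hle i))
  have hneg : C ι (fun i => (-y i) ⊔ 0) 0 := by
    refine hfull ι _ _ (fun i => le_sup_right) (fun i => ?_) habsx
    exact sup_le ((neg_le_abs _).trans (hle i)) ((abs_nonneg _).trans (hle i))
  -- negate the second
  have hnegneg : C ι (fun i => -((-y i) ⊔ 0)) 0 := by
    have := hC.smul ι (fun _ => (-1 : ℝ)) (fun i => (-y i) ⊔ 0) (-1) 0
      tendsto_const_nhds hneg
    simpa [neg_one_smul] using this
  have := hC.add ι _ _ 0 0 hpos hnegneg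
  have key : ∀ i, y i ⊔ 0 + -((-y i) ⊔ 0) = y i := by
    intro i
    have h1 : y i + ((-y i) ⊔ 0) = y i ⊔ 0 := by
      rw [add_sup]; simp [sup_comm]
    have : y i ⊔ 0 - ((-y i) ⊔ 0) = y i := by
      rw [sub_eq_iff_eq_add, ← h1]
    simpa [sub_eq_add_neg] using this
  simpa [key] using this
end

section
/- Let X be a Hausdorff locally solid convergence vector lattice in which every order interval [a,b] is compact (every net in [a,b] has a convergent quasi-subnet with limit in X). Then X is order (Dedekind) complete: every decreasing net bounded below in an order interval has an infimum. -/
open Filter Pointwise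

instance tailNe {κ : Type} [Preorder κ] (k₀ : κ) : Nonempty {k // k₀ ≤ k} := ⟨⟨k₀, le_rfl⟩⟩

instance tailDir {κ : Type} [Preorder κ] [IsDirected κ (· ≤ ·)] (k₀ : κ) :
    IsDirected {k // k₀ ≤ k} (· ≤ ·) := by
  constructor
  rintro ⟨p, hp⟩ ⟨q, hq⟩
  obtain ⟨r, hr1, hr2⟩ := directed_of (· ≤ · : κ → κ → Prop) p q
  exact ⟨⟨r, hp.trans hr1⟩, hr1, hr2⟩

lemma tail_qs {X κ : Type} [Preorder κ] [IsDirected κ (· ≤ ·)] (y : κ → X) (k₀ : κ) :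
    IsQuasiSubnet (fun k : {k // k₀ ≤ k} => y k.1) y := by
  intro k₁
  obtain ⟨r, hr1, hr2⟩ := directed_of (· ≤ · : κ → κ → Prop) k₀ k₁
  exact ⟨⟨r, hr1⟩, fun k hk => ⟨k.1, hr2.trans hk, rfl⟩⟩

section aux
variable {X : Type} [AddCommGroup X] [Lattice X]
    [CovariantClass X X (· + ·) (· ≤ ·)] [Module ℝ X] [PosSMulMono ℝ X]
    {κ : Type} [Preorder κ] [IsDirected κ (· ≤ ·)] [Nonempty κ]

lemma pos_closed (C : Conv X) (hC : IsLinearConv C) (hsolid : LocSolid C) (hH : ConvHausdorff C) (y : κ → X) (z : X) (h : C κ y z) (hy : ∀ k, 0 ≤ y k) : 0 ≤ z := by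
  have hu : C κ (fun k => y k + (-z)) 0 := by
    have := hC.add κ y (fun _ => -z) z (-z) h (hC.const κ (-z))
    simpa using this
  have hc : C κ (fun _ => z⁻) 0 := by
    apply hsolid κ (fun k => y k + -z) _ ?_ hu
    intro k
    have h1 : -z ≤ y k + -z := le_add_of_nonneg_left (hy k)
    have h2 : z⁻ ≤ (y k + -z) ⊔ 0 := by
      rw [negPart_def, ← posPart_def]
      calc -z ⊔ 0 ≤ (y k + -z) ⊔ 0 := sup_le_sup_right h1 0
      _ = (y k + -z)⁺ := (posPart_def _).symm
    calc |z⁻| = z⁻ := abs_of_nonneg (negPart_nonneg z)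
      _ ≤ (y k + -z) ⊔ 0 := h2
      _ = (y k + -z)⁺ := (posPart_def _).symm
      _ ≤ |y k + -z| := sup_le (le_abs_self _) (abs_nonneg _)
  have := hH κ (fun _ => z⁻) z⁻ 0 (hC.const κ z⁻) hc
  exact negPart_eq_zero.mp this

lemma le_limit (C : Conv X) (hC : IsLinearConv C) (hsolid : LocSolid C) (hH : ConvHausdorff C) (y : κ → X) (z w : X) (h : C κ y z) (hw : ∀ k, w ≤ y k) : w ≤ z := by
  have h' : C κ (fun k => y k + (-w)) (z + -w) :=
    hC.add κ y (fun _ => -w) z (-w) h (hC.const κ (-w))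
  have := pos_closed C hC hsolid hH _ _ h' (fun k => by simpa using hw k)
  rw [← sub_eq_add_neg] at this
  exact sub_nonneg.mp this

lemma limit_le (C : Conv X) (hC : IsLinearConv C) (hsolid : LocSolid C) (hH : ConvHausdorff C) (y : κ → X) (z w : X) (h : C κ y z) (hw : ∀ k, y k ≤ w) : z ≤ w := by
  have hneg : C κ (fun k => -y k) (-z) := by
    have := hC.smul κ (fun _ => (-1 : ℝ)) y (-1) z tendsto_const_nhds h
    simpa [neg_one_smul] using this
  have := le_limit C hC hsolid hH _ _ (-w) hneg (fun k => neg_le_neg_iff.mpr (hw k))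
  exact neg_le_neg_iff.mp this

end aux

/-- If every order interval of a Hausdorff locally solid convergence vector
lattice is compact (every net in it has a convergent quasi-subnet), then the
lattice is order complete: every decreasing net in an order interval has an
infimum. -/
theorem stmt6 {X : Type} [AddCommGroup X] [Lattice X]
    [CovariantClass X X (· + ·) (· ≤ ·)] [Module ℝ X] [PosSMulMono ℝ X]
    (C : Conv X) (hC : IsLinearConv C) (hsolid : LocSolid C) (hH : ConvHausdorff C)
    (hcomp : ∀ (a b : X) (ι : Type) [Preorder ι] [IsDirected ι (· ≤ ·)] [Nonempty ι]
      (x : ι → X), (∀ i, x i ∈ Set.Icc a b) →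
      ∃ (κ : Type) (_ : Preorder κ) (_ : IsDirected κ (· ≤ ·)) (_ : Nonempty κ)
        (y : κ → X) (z : X), IsQuasiSubnet y x ∧ C κ y z) :
    ∀ (a b : X) (ι : Type) [Preorder ι] [IsDirected ι (· ≤ ·)] [Nonempty ι]
      (x : ι → X), Antitone x → (∀ i, x i ∈ Set.Icc a b) →
      ∃ z : X, IsGLB (Set.range x) z := by
  intro a b ι _ _ _ x hx hbd
  obtain ⟨κ, _, _, _, y, z, hqs, hCz⟩ := hcomp a b ι x hbd
  refine ⟨z, ?_, ?_⟩
  · rintro _ ⟨i, rfl⟩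
    obtain ⟨k₀, hk₀⟩ := hqs i
    have htail : C {k // k₀ ≤ k} (fun k => y k.1) z :=
      hC.quasi κ _ y (fun k : {k // k₀ ≤ k} => y k.1) z hCz (tail_qs y k₀)
    refine limit_le C hC hsolid hH _ _ _ htail ?_
    rintro ⟨k, hk⟩
    obtain ⟨i', hi', he⟩ := hk₀ k hk
    simpa [he] using hx hi'
  · intro w hw
    obtain ⟨k₀, hk₀⟩ := hqs (Classical.arbitrary ι)
    have htail : C {k // k₀ ≤ k} (fun k => y k.1) z :=
      hC.quasi κ _ y (fun k : {k // k₀ ≤ k} => y k.1) z hCz (tail_qs y k₀)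
    refine le_limit C hC hsolid hH _ _ _ htail ?_
    rintro ⟨k, hk⟩
    obtain ⟨i', hi', he⟩ := hk₀ k hk
    simpa [he] using hw ⟨i', rfl⟩
end

section
/- In an Archimedean vector lattice X with a strong unit e, relative uniform convergence is unbounded: if (x_α) is a net in X₊ with x_α ∧ u →_ru 0 for every u ∈ X₊, then x_α →_ru 0. -/
open Filter Pointwise

/-!
Any regulator `w` of `x_α ⊓ e` satisfies `w ≤ m • e`, so `e` itself is a regulator and
`x_α ⊓ e ≤ c • e` eventually, for any `c > 0`. For `c < 1` this forces `x_α ≤ c • e`: if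
`0 ≤ z ≤ M • e` and `t = max 1 M`, then `z = z ⊓ t • e ≤ t • (z ⊓ e) ≤ (t * c) • e`, and iterating
from the bound `z ≤ N • e` given by the strong unit shrinks `M` geometrically down to `c`.
-/

section StrongUnit

variable {X : Type} [AddCommGroup X] [Lattice X] [IsOrderedAddMonoid X]
  [Module ℝ X] [PosSMulMono ℝ X]

lemma inf_smul_le_smul_inf {z e : X} {t : ℝ} (hz : 0 ≤ z) (ht : 1 ≤ t) :
    z ⊓ t • e ≤ t • (z ⊓ e) :=
  calc z ⊓ t • e ≤ t • z ⊓ t • e := inf_le_inf_right _ (le_smul_of_one_le_left hz ht)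
    _ = t • (z ⊓ e) := ((OrderIso.smulRight (by linarith : (0 : ℝ) < t)).map_inf z e).symm

lemma le_smul_of_inf_le_smul {z e : X} {c : ℝ} {N : ℕ} (hz : 0 ≤ z) (he : 0 ≤ e)
    (hc₀ : 0 < c) (hc₁ : c < 1) (hN : z ≤ N • e) (hinf : z ⊓ e ≤ c • e) : z ≤ c • e := by
  have contract : ∀ M : ℝ, z ≤ M • e → z ≤ (max 1 M * c) • e := fun M hM =>
    calc z = z ⊓ max 1 M • e :=
          (inf_of_le_left (hM.trans (smul_le_smul_of_nonneg_right (le_max_right _ _) he))).symm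
      _ ≤ max 1 M • (z ⊓ e) := inf_smul_le_smul_inf hz (le_max_left _ _)
      _ ≤ max 1 M • c • e := smul_le_smul_of_nonneg_left hinf (by positivity)
      _ = (max 1 M * c) • e := smul_smul _ _ _
  have iterate : ∀ k : ℕ, z ≤ max c (N * c ^ k) • e := by
    intro k
    induction k with
    | zero =>
      refine hN.trans ?_
      rw [← Nat.cast_smul_eq_nsmul ℝ]
      exact smul_le_smul_of_nonneg_right (by simp) he
    | succ k ih =>
      refine (contract _ ih).trans_eq ?_
      rw [← max_assoc, max_eq_left hc₁.le, max_mul_of_nonneg _ _ hc₀.le, one_mul, pow_succ,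
        mul_assoc]
  obtain ⟨k, hk⟩ : ∃ k : ℕ, N * c ^ k < c := by
    have hlim := (tendsto_pow_atTop_nhds_zero_of_lt_one hc₀.le hc₁).const_mul (N : ℝ)
    rw [mul_zero] at hlim
    exact (hlim.eventually (gt_mem_nhds hc₀)).exists
  simpa only [max_eq_left hk.le] using iterate k

/-- Relative uniform convergence of `y` to `0` with regulator `w`. -/
def TendstoRUWith {ι : Type} [Preorder ι] (y : ι → X) (w : X) : Prop :=
  ∀ ε : ℝ, 0 < ε → ∃ i₀, ∀ i, i₀ ≤ i → |y i| ≤ ε • w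

lemma TendstoRUWith.of_le_nsmul {ι : Type} [Preorder ι] {y : ι → X} {w e : X} {m : ℕ}
    (hy : TendstoRUWith y w) (he : 0 ≤ e) (hwm : w ≤ m • e) : TendstoRUWith y e := by
  intro ε hε
  obtain ⟨i₀, hi₀⟩ := hy (ε / (m + 1)) (by positivity)
  refine ⟨i₀, fun i hi => ?_⟩
  rw [← Nat.cast_smul_eq_nsmul ℝ] at hwm
  calc |y i| ≤ (ε / (m + 1)) • w := hi₀ i hi
    _ ≤ (ε / (m + 1)) • (m : ℝ) • e := smul_le_smul_of_nonneg_left hwm (by positivity)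
    _ = (ε / (m + 1) * m) • e := smul_smul _ _ _
    _ ≤ ε • e := by
      refine smul_le_smul_of_nonneg_right ?_ he
      rw [div_mul_eq_mul_div, div_le_iff₀ (by positivity)]
      nlinarith

end StrongUnit

theorem stmt12_general {X : Type} [AddCommGroup X] [Lattice X]
    [CovariantClass X X (· + ·) (· ≤ ·)] [Module ℝ X] [PosSMulMono ℝ X]
    (e : X) (he : 0 ≤ e) (hsu : ∀ x : X, ∃ n : ℕ, |x| ≤ n • e)
    (ι : Type) [Preorder ι] (x : ι → X) (hpos : ∀ i, 0 ≤ x i)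
    (h : ∀ u : X, 0 ≤ u → ∃ w : X, 0 ≤ w ∧ ∀ ε : ℝ, 0 < ε →
      ∃ i₀, ∀ i, i₀ ≤ i → |x i ⊓ u| ≤ ε • w) :
    ∃ w : X, 0 ≤ w ∧ ∀ ε : ℝ, 0 < ε → ∃ i₀, ∀ i, i₀ ≤ i → |x i| ≤ ε • w := by
  have : IsOrderedAddMonoid X := { add_le_add_left := fun _ _ hab _ => add_le_add hab le_rfl }
  obtain ⟨w, -, hw⟩ := h e he
  obtain ⟨m, hm⟩ := hsu w
  have hxe : TendstoRUWith (fun i => x i ⊓ e) e :=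
    TendstoRUWith.of_le_nsmul hw he ((le_abs_self w).trans hm)
  refine ⟨e, he, fun ε hε => ?_⟩
  set c := min ε (1 / 2)
  obtain ⟨i₀, hi₀⟩ := hxe c (by positivity)
  refine ⟨i₀, fun i hi => ?_⟩
  obtain ⟨n, hn⟩ := hsu (x i)
  have hinf := hi₀ i hi
  rw [abs_of_nonneg (hpos i)] at hn ⊢
  rw [abs_of_nonneg (le_inf (hpos i) he)] at hinf
  calc x i ≤ c • e := le_smul_of_inf_le_smul (hpos i) he (by positivity) (by norm_num [c]) hn hinf
    _ ≤ ε • e := smul_le_smul_of_nonneg_right (min_le_left _ _) he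

/-- In a vector lattice with a strong unit, relative uniform convergence is
unbounded. -/
theorem stmt12 {X : Type} [AddCommGroup X] [Lattice X]
    [CovariantClass X X (· + ·) (· ≤ ·)] [Module ℝ X] [PosSMulMono ℝ X]
    (e : X) (he : 0 ≤ e) (hsu : ∀ x : X, ∃ n : ℕ, |x| ≤ n • e)
    (ι : Type) [Preorder ι] [IsDirected ι (· ≤ ·)] [Nonempty ι] (x : ι → X) (hpos : ∀ i, 0 ≤ x i)
    (h : ∀ u : X, 0 ≤ u → ∃ w : X, 0 ≤ w ∧ ∀ ε : ℝ, 0 < ε →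
      ∃ i₀, ∀ i, i₀ ≤ i → |x i ⊓ u| ≤ ε • w) :
    ∃ w : X, 0 ≤ w ∧ ∀ ε : ℝ, 0 < ε → ∃ i₀, ∀ i, i₀ ≤ i → |x i| ≤ ε • w :=
  stmt12_general e he hsu ι x hpos h
end

section
/- Let Ω be a locally compact Hausdorff topological space. In C₀(Ω), if a net (f_α) of nonnegative functions converges uniformly on compact sets to 0, then f_α ∧ u converges relatively uniformly to 0 with regulator √u, for every 0 ≤ u ∈ C₀(Ω): for each ε > 0 eventually (f_α ∧ u)(ω) ≤ ε·√(u(ω)) for all ω ∈ Ω. -/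
open Filter Pointwise

/-- In `C₀(Ω)` over a locally compact Hausdorff space, if a net of nonnegative
functions converges to `0` uniformly on compact sets, then for every
`0 ≤ u ∈ C₀(Ω)` the net `f_α ⊓ u` converges relatively uniformly to `0` with
regulator `√u`. -/
theorem stmt13 {Ω : Type} [TopologicalSpace Ω] [LocallyCompactSpace Ω] [T2Space Ω]
    (ι : Type) [Preorder ι] [IsDirected ι (· ≤ ·)] [Nonempty ι]
    (f : ι → ZeroAtInftyContinuousMap Ω ℝ) (hf : ∀ i ω, 0 ≤ f i ω)
    (hucc : ∀ K : Set Ω, IsCompact K → ∀ ε : ℝ, 0 < ε →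
      ∃ i₀, ∀ i, i₀ ≤ i → ∀ ω ∈ K, f i ω < ε)
    (u : ZeroAtInftyContinuousMap Ω ℝ) (hu : ∀ ω, 0 ≤ u ω) :
    ∀ ε : ℝ, 0 < ε → ∃ i₀, ∀ i, i₀ ≤ i → ∀ ω : Ω,
      min (f i ω) (u ω) ≤ ε * Real.sqrt (u ω) := by
  intro ε hε
  have hε2 : (0:ℝ) < ε * ε := mul_pos hε hε
  -- compactness of {ω : ε² ≤ u ω}
  have h0 : ∀ᶠ ω in Filter.cocompact Ω, u ω ∈ Set.Iio (ε*ε) := by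
    have := u.zero_at_infty'
    exact this (IsOpen.mem_nhds isOpen_Iio (by simpa using hε2))
  rw [Filter.eventually_iff, Filter.mem_cocompact] at h0
  obtain ⟨K, hK, hKsub⟩ := h0
  have hSsub : (u ⁻¹' Set.Ici (ε*ε)) ⊆ K := by
    intro ω hω
    by_contra hωK
    have h2 : u ω < ε*ε := hKsub hωK
    have h3 : ε*ε ≤ u ω := hω
    linarith
  have hScomp : IsCompact (u ⁻¹' Set.Ici (ε*ε)) :=
    hK.of_isClosed_subset (isClosed_Ici.preimage u.continuous) hSsub
  obtain ⟨i₀, hi₀⟩ := hucc _ hScomp (ε*ε) hε2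
  refine ⟨i₀, fun i hi ω => ?_⟩
  have hs := Real.sq_sqrt (hu ω)
  by_cases hω : ε*ε ≤ u ω
  · have hf' : f i ω < ε*ε := hi₀ i hi ω hω
    have hsq : ε ≤ Real.sqrt (u ω) := by
      have := Real.sqrt_le_sqrt hω
      simpa [Real.sqrt_mul_self hε.le] using this
    calc min (f i ω) (u ω) ≤ f i ω := min_le_left _ _
      _ ≤ ε * ε := hf'.le
      _ ≤ ε * Real.sqrt (u ω) := by nlinarith
  · push_neg at hω
    have hsq : Real.sqrt (u ω) < ε := by
      have h1 : Real.sqrt (u ω) < Real.sqrt (ε*ε) :=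
        (Real.sqrt_lt_sqrt (hu ω) hω)
      simpa [Real.sqrt_mul_self hε.le] using h1
    calc min (f i ω) (u ω) ≤ u ω := min_le_right _ _
      _ = Real.sqrt (u ω) * Real.sqrt (u ω) := (Real.mul_self_sqrt (hu ω)).symm
      _ ≤ ε * Real.sqrt (u ω) := by nlinarith [Real.sqrt_nonneg (u ω)]
end

section
/- Let X be a convergence vector space over ℝ (or ℂ). A subset A of X is bounded (meaning: for every net r_γ → 0 of scalars, the net (r_γ·a) indexed by pairs (γ, a) with a ∈ A, ordered by the first coordinate, converges to 0) if and only if for every net (r_γ) of scalars with r_γ → 0 and every net (x_γ) in A with the same index set, r_γ·x_γ → 0. -/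
open Filter Pointwise

/-- A subset `A` of a convergence vector space is bounded (the net
`(r_γ • a)_{(γ,a)}` indexed by pairs ordered by the first coordinate converges
to `0` for every null net of scalars) iff `r_γ • x_γ → 0` for every null net of
scalars `(r_γ)` and every net `(x_γ)` in `A` with the same index set. -/
theorem stmt14 {X : Type} [AddCommGroup X] [Module ℝ X]
    (C : Conv X) (hC : IsLinearConv C) (A : Set X) [Nonempty (↥A)] :
    (∀ (Γ : Type) [Preorder Γ] [IsDirected Γ (· ≤ ·)] [Nonempty Γ] (r : Γ → ℝ),
      Tendsto r atTop (nhds 0) →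
      C (FstOrd Γ ↥A) (fun p => r (Prod.fst p) • ((Prod.snd p : ↥A) : X)) 0) ↔
    (∀ (Γ : Type) [Preorder Γ] [IsDirected Γ (· ≤ ·)] [Nonempty Γ]
      (r : Γ → ℝ) (x : Γ → X), Tendsto r atTop (nhds 0) → (∀ γ, x γ ∈ A) →
      C Γ (fun γ => r γ • x γ) 0) := by
  constructor
  · intro h Γ _ _ _ r x hr hx
    have hb := h Γ r hr
    -- the net (r γ • x γ) is a quasi-subnet of the big net
    refine hC.quasi (FstOrd Γ ↥A) Γ _ _ 0 hb ?_
    intro i₀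
    refine ⟨i₀.1, fun k hk => ⟨(k, ⟨x k, hx k⟩), hk, rfl⟩⟩
  · intro h Γ _ _ _ r hr
    have hfst : Tendsto (fun p : FstOrd Γ ↥A => Prod.fst p) atTop atTop := by
      refine tendsto_atTop_atTop.mpr fun b => ⟨((b, Classical.arbitrary ↥A) : FstOrd Γ ↥A),
        fun a ha => ha⟩
    exact h (FstOrd Γ ↥A) (fun p => r (Prod.fst p)) (fun p => ((Prod.snd p : ↥A) : X))
      (hr.comp hfst) (fun p => (Prod.snd p).2)
end

section
/- Let X be an order complete vector lattice that is universally complete (in particular, X has a weak unit and arbitrary suprema of disjoint positive families exist). If A ⊆ X₊ is uo-bounded, meaning that the net ((1/n)·a)_{(n,a) ∈ ℕ×A} (ordered by first coordinate) converges to 0 in unbounded order convergence, then A is order bounded: there exists h ∈ X₊ with a ≤ h for all a ∈ A. -/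
open Filter Pointwise

/-!
Put `x n = sup_{a ∈ A} ((n+1)⁻¹ • a ⊓ e)`. Uo-boundedness (tested against `u = e`) says `x n ↓ 0`.
Let `P n` be the component of `e` in the band generated by `(e - x n)⁺`; the `P n` increase to `e`.
On that band `(n+1)⁻¹ • a ⊓ e ≤ x n < e`, so `(a - (n+1) • e)⁺` is disjoint from `P n` for every
`a ∈ A`. Cutting `e` into the disjoint components `d n = P n - P (n-1)`, the supremum `h` of the
disjoint family `(n+1) • d n` exists, and `(a - h)⁺` is disjoint from every `d n`, hence from the
weak unit `e`, so `a ≤ h`.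
-/

open Set

section LatticeOrderedGroup

variable {α : Type*} [Lattice α] [AddCommGroup α] {a e h t v w x y z : α}

def IsComponent (e p : α) : Prop := p ⊓ (e - p) = 0

lemma IsComponent.nonneg {p : α} (h : IsComponent e p) : 0 ≤ p := h ▸ inf_le_left

variable [AddLeftMono α]

lemma IsComponent.le {p : α} (h : IsComponent e p) : p ≤ e := sub_nonneg.1 (h ▸ inf_le_right)

lemma inf_add_le_inf_add_inf (hx : 0 ≤ x) (hy : 0 ≤ y) (hz : 0 ≤ z) :
    x ⊓ (y + z) ≤ x ⊓ y + x ⊓ z := by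
  rw [← sub_le_iff_le_add', sub_inf]
  refine sup_le ((sub_nonpos.2 inf_le_left).trans (le_inf hx hz)) (le_inf ?_ ?_)
  · exact sub_le_iff_le_add.2 (inf_le_left.trans (le_add_of_nonneg_right hy))
  · exact sub_le_iff_le_add.2 (inf_le_right.trans (add_comm y z).le)

lemma inf_nsmul_eq_zero (hx : 0 ≤ x) (hy : 0 ≤ y) (h : x ⊓ y = 0) (n : ℕ) : x ⊓ n • y = 0 := by
  induction n with
  | zero => simpa using hx
  | succ n ih =>
    refine le_antisymm ?_ (le_inf hx (nsmul_nonneg hy _))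
    calc x ⊓ (n + 1) • y = x ⊓ (n • y + y) := by rw [succ_nsmul]
      _ ≤ x ⊓ n • y + x ⊓ y := inf_add_le_inf_add_inf hx (nsmul_nonneg hy n) hy
      _ = 0 := by rw [ih, h, add_zero]

lemma nsmul_inf_nsmul_eq_zero (hx : 0 ≤ x) (hy : 0 ≤ y) (h : x ⊓ y = 0) (m n : ℕ) :
    m • x ⊓ n • y = 0 := by
  have hyx : y ⊓ m • x = 0 := inf_nsmul_eq_zero hy hx (by rwa [inf_comm]) m
  exact inf_nsmul_eq_zero (nsmul_nonneg hx m) hy (by rwa [inf_comm]) n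

lemma posPart_nsmul_inf_eq_zero (hw : 0 ≤ w) (h : t⁺ ⊓ w = 0) (n : ℕ) : (n • t)⁺ ⊓ w = 0 := by
  have hle : (n • t)⁺ ≤ n • t⁺ :=
    sup_le (nsmul_le_nsmul_right (le_posPart t) n) (nsmul_nonneg (posPart_nonneg t) n)
  refine le_antisymm ?_ (le_inf (posPart_nonneg _) hw)
  calc (n • t)⁺ ⊓ w ≤ w ⊓ n • t⁺ := by rw [inf_comm]; exact inf_le_inf_left w hle
    _ = 0 := inf_nsmul_eq_zero hw (posPart_nonneg t) (by rwa [inf_comm]) n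

lemma posPart_sub_inf_posPart_sub_eq_zero (h : y ⊓ e ≤ x) : (y - e)⁺ ⊓ (e - x)⁺ = 0 := by
  have hle : (e - x)⁺ ≤ (y - e)⁻ := by
    rw [negPart_def, neg_sub]
    refine sup_le ?_ le_sup_right
    calc e - x ≤ e - y ⊓ e := sub_le_sub_left h e
      _ = (e - y) ⊔ 0 := by rw [sub_inf, sub_self]
  refine le_antisymm ?_ (le_inf (posPart_nonneg _) (posPart_nonneg _))
  exact (inf_le_inf_left _ hle).trans (posPart_inf_negPart_eq_zero _).le

/-- Infinite distributivity of `⊓` over suprema. -/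
lemma inf_le_of_isLUB {S : Set α} {s : α} (hs : IsLUB S s) (v b : α)
    (hb : ∀ y ∈ S, v ⊓ y ≤ b) : v ⊓ s ≤ b := by
  have hS : ∀ y ∈ S, y ≤ s ⊔ v + b - v := by
    intro y hy
    have h4 : v + y ≤ b + (v ⊔ s) := by
      calc v + y = v ⊓ y + (v ⊔ y) := (inf_add_sup v y).symm
        _ ≤ b + (v ⊔ s) := add_le_add (hb y hy) (sup_le_sup_left (hs.1 hy) v)
    calc y = (v + y) - v := by abel
      _ ≤ (b + (v ⊔ s)) - v := sub_le_sub_right h4 v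
      _ = s ⊔ v + b - v := by rw [sup_comm v s]; abel
  calc v ⊓ s = (v + s) - (v ⊔ s) := by rw [← inf_add_sup v s]; abel
    _ ≤ (v + (s ⊔ v + b - v)) - (v ⊔ s) := sub_le_sub_right (add_le_add_right (hs.2 hS) v) _
    _ = b := by rw [sup_comm v s]; abel

lemma IsComponent.posPart_sub_inf_eq_zero {d : α} {k : ℕ} (hd : IsComponent e d)
    (hk : k • d ≤ h) (ha : (a - k • e)⁺ ⊓ d = 0) : (a - h)⁺ ⊓ d = 0 := by
  have hed : 0 ≤ e - d := sub_nonneg.2 hd.le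
  have hbound : (a - h)⁺ ≤ (a - k • e)⁺ + k • (e - d) := by
    refine sup_le ?_ (add_nonneg (posPart_nonneg _) (nsmul_nonneg hed k))
    calc a - h ≤ a - k • d := sub_le_sub_left hk a
      _ = (a - k • e) + k • (e - d) := by rw [nsmul_sub]; abel
      _ ≤ (a - k • e)⁺ + k • (e - d) := add_le_add_left (le_posPart _) _
  refine le_antisymm ?_ (le_inf (posPart_nonneg _) hd.nonneg)
  calc (a - h)⁺ ⊓ d ≤ d ⊓ ((a - k • e)⁺ + k • (e - d)) := by
        rw [inf_comm]; exact inf_le_inf_left d hbound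
    _ ≤ d ⊓ (a - k • e)⁺ + d ⊓ k • (e - d) :=
        inf_add_le_inf_add_inf hd.nonneg (posPart_nonneg _) (nsmul_nonneg hed k)
    _ = 0 := by rw [inf_comm, ha, inf_nsmul_eq_zero hd.nonneg hed hd k, add_zero]

def increments (P : ℕ → α) : ℕ → α
  | 0 => P 0
  | n + 1 => P (n + 1) - P n

variable {P : ℕ → α}

lemma increments_le (hc : ∀ n, IsComponent e (P n)) (n : ℕ) : increments P n ≤ P n := by
  cases n with
  | zero => exact le_rfl
  | succ n => exact sub_le_self _ (hc n).nonneg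

lemma increments_succ_le_sub (hc : ∀ n, IsComponent e (P n)) (n : ℕ) :
    increments P (n + 1) ≤ e - P n :=
  sub_le_sub_right (hc (n + 1)).le _

lemma isComponent_increments (hP : Monotone P) (hc : ∀ n, IsComponent e (P n)) (n : ℕ) :
    IsComponent e (increments P n) := by
  cases n with
  | zero => exact hc 0
  | succ n =>
    have hd : 0 ≤ increments P (n + 1) := sub_nonneg.2 (hP n.le_succ)
    have hde : increments P (n + 1) ≤ e := (increments_le hc _).trans (hc _).le
    refine le_antisymm ?_ (le_inf hd (sub_nonneg.2 hde))
    calc increments P (n + 1) ⊓ (e - increments P (n + 1))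
        = increments P (n + 1) ⊓ ((e - P (n + 1)) + P n) := by
          congr 1; simp only [increments]; abel
      _ ≤ increments P (n + 1) ⊓ (e - P (n + 1)) + increments P (n + 1) ⊓ P n :=
          inf_add_le_inf_add_inf hd (sub_nonneg.2 (hc _).le) (hc n).nonneg
      _ ≤ P (n + 1) ⊓ (e - P (n + 1)) + (e - P n) ⊓ P n :=
          add_le_add (inf_le_inf_right _ (increments_le hc _))
            (inf_le_inf_right _ (increments_succ_le_sub hc n))
      _ = 0 := by rw [hc (n + 1), inf_comm, hc n, add_zero]

lemma increments_inf_increments_eq_zero (hP : Monotone P) (hc : ∀ n, IsComponent e (P n))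
    {m n : ℕ} (hmn : m < n) : increments P m ⊓ increments P n = 0 := by
  obtain ⟨n, rfl⟩ : ∃ k, n = k + 1 := ⟨n - 1, by omega⟩
  refine le_antisymm ?_ (le_inf (isComponent_increments hP hc m).nonneg
    (isComponent_increments hP hc _).nonneg)
  calc increments P m ⊓ increments P (n + 1) ≤ P n ⊓ (e - P n) :=
        inf_le_inf ((increments_le hc m).trans (hP (by omega))) (increments_succ_le_sub hc n)
    _ = 0 := hc n

lemma inf_eq_zero_of_forall_inf_increments (hP : Monotone P) (hc : ∀ n, IsComponent e (P n))
    (hlub : IsLUB (range P) e) (hv : 0 ≤ v) (h : ∀ n, v ⊓ increments P n = 0) : v ⊓ e = 0 := by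
  have hvP : ∀ n, v ⊓ P n = 0 := by
    intro n
    induction n with
    | zero => exact h 0
    | succ n ih =>
      refine le_antisymm ?_ (le_inf hv (hc _).nonneg)
      calc v ⊓ P (n + 1) = v ⊓ (P n + increments P (n + 1)) := by
            simp only [increments, add_sub_cancel]
        _ ≤ v ⊓ P n + v ⊓ increments P (n + 1) :=
            inf_add_le_inf_add_inf hv (hc n).nonneg (sub_nonneg.2 (hP n.le_succ))
        _ = 0 := by rw [ih, h, add_zero]
  exact le_antisymm (inf_le_of_isLUB hlub v 0 (by rintro _ ⟨n, rfl⟩; exact (hvP n).le))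
    (le_inf hv ((hc 0).nonneg.trans (hc 0).le))

end LatticeOrderedGroup

section ConditionallyComplete

variable {α : Type*} [ConditionallyCompleteLattice α] [AddCommGroup α] {e g w w' z : α}

/-- The projection of `e` onto the band generated by `w ≥ 0`. -/
noncomputable def bandComponent (w e : α) : α := sSup (range fun n : ℕ => n • w ⊓ e)

lemma bddAbove_range_nsmul_inf : BddAbove (range fun n : ℕ => n • w ⊓ e) :=
  ⟨e, by rintro _ ⟨n, rfl⟩; exact inf_le_right⟩

lemma nsmul_inf_le_bandComponent (n : ℕ) : n • w ⊓ e ≤ bandComponent w e :=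
  le_csSup bddAbove_range_nsmul_inf ⟨n, rfl⟩

lemma bandComponent_le : bandComponent w e ≤ e :=
  csSup_le (range_nonempty _) (by rintro _ ⟨n, rfl⟩; exact inf_le_right)

lemma bandComponent_nonneg (he : 0 ≤ e) : 0 ≤ bandComponent w e := by
  simpa [inf_eq_left.2 he] using nsmul_inf_le_bandComponent (w := w) (e := e) 0

variable [AddLeftMono α]

lemma le_zero_of_forall_nsmul_le (h : ∀ n : ℕ, n • g ≤ e) : g ≤ 0 := by
  have hbdd : BddAbove (range fun n : ℕ => n • g) := ⟨e, by rintro _ ⟨n, rfl⟩; exact h n⟩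
  have hs : sSup (range fun n : ℕ => n • g) ≤ sSup (range fun n : ℕ => n • g) - g := by
    refine csSup_le (range_nonempty _) ?_
    rintro _ ⟨n, rfl⟩
    exact le_sub_iff_add_le.2 (succ_nsmul g n ▸ le_csSup hbdd ⟨n + 1, rfl⟩)
  simpa using hs

lemma bandComponent_mono (h : w ≤ w') : bandComponent w e ≤ bandComponent w' e :=
  csSup_le (range_nonempty _) <| by
    rintro _ ⟨n, rfl⟩
    exact (inf_le_inf_right e (nsmul_le_nsmul_right h n)).trans (nsmul_inf_le_bandComponent n)

lemma inf_bandComponent_eq_zero (hz : 0 ≤ z) (hw : 0 ≤ w) (he : 0 ≤ e) (h : z ⊓ w = 0) :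
    z ⊓ bandComponent w e = 0 := by
  refine le_antisymm ?_ (le_inf hz (bandComponent_nonneg he))
  refine inf_le_of_isLUB (isLUB_csSup (range_nonempty _) bddAbove_range_nsmul_inf) z 0 ?_
  rintro _ ⟨n, rfl⟩
  exact (inf_le_inf_left z inf_le_left).trans (inf_nsmul_eq_zero hz hw h n).le

lemma sub_bandComponent_inf_eq_zero (hw : 0 ≤ w) (he : 0 ≤ e) :
    (e - bandComponent w e) ⊓ w = 0 := by
  set g := (e - bandComponent w e) ⊓ w
  have hg : ∀ n : ℕ, n • g ≤ e := by
    intro n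
    induction n with
    | zero => simpa using he
    | succ n ih =>
      calc (n + 1) • g = n • g + g := succ_nsmul g n
        _ ≤ bandComponent w e + (e - bandComponent w e) :=
            add_le_add ((le_inf (nsmul_le_nsmul_right inf_le_right n) ih).trans
              (nsmul_inf_le_bandComponent n)) inf_le_left
        _ = e := add_sub_cancel _ _
  exact le_antisymm (le_zero_of_forall_nsmul_le hg) (le_inf (sub_nonneg.2 bandComponent_le) hw)

lemma isComponent_bandComponent (hw : 0 ≤ w) (he : 0 ≤ e) : IsComponent e (bandComponent w e) := by
  rw [IsComponent, inf_comm]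
  exact inf_bandComponent_eq_zero (sub_nonneg.2 bandComponent_le) hw he
    (sub_bandComponent_inf_eq_zero hw he)

lemma isLUB_range_bandComponent {ι : Type*} {x : ι → α} (he : 0 ≤ e) (hx : IsGLB (range x) 0) :
    IsLUB (range fun i => bandComponent (e - x i)⁺ e) e := by
  refine ⟨by rintro _ ⟨i, rfl⟩; exact bandComponent_le, fun b hb => ?_⟩
  have hr : 0 ≤ e - e ⊓ b := sub_nonneg.2 inf_le_left
  have hrx : ∀ i, e - e ⊓ b ≤ x i := by
    intro i
    have hrP : e - e ⊓ b ≤ e - bandComponent (e - x i)⁺ e :=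
      sub_le_sub_left (le_inf bandComponent_le (hb ⟨i, rfl⟩)) e
    have hre : e - e ⊓ b ≤ e := hrP.trans (sub_le_self e (bandComponent_nonneg he))
    have hrw : (e - e ⊓ b) ⊓ (e - x i)⁺ = 0 :=
      le_antisymm ((inf_le_inf_right _ hrP).trans
        (sub_bandComponent_inf_eq_zero (posPart_nonneg _) he).le) (le_inf hr (posPart_nonneg _))
    calc e - e ⊓ b = (e - e ⊓ b) ⊓ ((e - x i)⁺ + x i) :=
          (inf_eq_left.2 (hre.trans (sub_le_iff_le_add.1 (le_posPart _)))).symm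
      _ ≤ (e - e ⊓ b) ⊓ (e - x i)⁺ + (e - e ⊓ b) ⊓ x i :=
          inf_add_le_inf_add_inf hr (posPart_nonneg _) (hx.1 ⟨i, rfl⟩)
      _ ≤ x i := by rw [hrw, zero_add]; exact inf_le_right
  have hr0 : e - e ⊓ b ≤ 0 := hx.2 (by rintro _ ⟨i, rfl⟩; exact hrx i)
  exact (sub_nonpos.1 hr0).trans inf_le_right

theorem exists_bound_of_exhausting_components {P : ℕ → α}
    (hdisj : ∀ D : Set α, (∀ d ∈ D, 0 ≤ d) →
      (∀ d₁ ∈ D, ∀ d₂ ∈ D, d₁ ≠ d₂ → d₁ ⊓ d₂ = 0) → ∃ s : α, IsLUB D s)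
    (hweak : ∀ x : α, 0 ≤ x → x ⊓ e = 0 → x = 0)
    (hP : Monotone P) (hc : ∀ n, IsComponent e (P n)) (hlub : IsLUB (range P) e) :
    ∃ h : α, 0 ≤ h ∧ ∀ a : α, (∀ n : ℕ, (a - (n + 1) • e)⁺ ⊓ P n = 0) → a ≤ h := by
  have hd := isComponent_increments hP hc
  obtain ⟨h, hh⟩ := hdisj (range fun n => (n + 1) • increments P n)
    (by rintro _ ⟨n, rfl⟩; exact nsmul_nonneg (hd n).nonneg _) <| by
      rintro _ ⟨m, rfl⟩ _ ⟨n, rfl⟩ hne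
      have hmn : m ≠ n := by rintro rfl; exact hne rfl
      refine nsmul_inf_nsmul_eq_zero (hd m).nonneg (hd n).nonneg ?_ _ _
      rcases hmn.lt_or_gt with hlt | hlt
      · exact increments_inf_increments_eq_zero hP hc hlt
      · rw [inf_comm]; exact increments_inf_increments_eq_zero hP hc hlt
  have hle : ∀ n, (n + 1) • increments P n ≤ h := fun n => hh.1 ⟨n, rfl⟩
  refine ⟨h, (nsmul_nonneg (hd 0).nonneg _).trans (hle 0), fun a ha => ?_⟩
  have hv : ∀ n, (a - h)⁺ ⊓ increments P n = 0 := fun n =>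
    (hd n).posPart_sub_inf_eq_zero (hle n) <| le_antisymm
      ((inf_le_inf_left _ (increments_le hc n)).trans (ha n).le)
      (le_inf (posPart_nonneg _) (hd n).nonneg)
  have ha0 : (a - h)⁺ = 0 := hweak _ (posPart_nonneg _)
    (inf_eq_zero_of_forall_inf_increments hP hc hlub (posPart_nonneg _) hv)
  exact sub_nonpos.1 (posPart_eq_zero.1 ha0)

end ConditionallyComplete

lemma OConvZero.le_zero {X : Type} [Lattice X] [AddCommGroup X] {ι : Type} [Preorder ι]
    {z : ι → X} (hz : OConvZero z) {b : X}
    (hb : ∀ i₀ t, (∀ i, i₀ ≤ i → |z i| ≤ t) → b ≤ t) : b ≤ 0 := by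
  obtain ⟨κ, _, _, _, u, -, hu, hdom⟩ := hz
  refine hu.2 ?_
  rintro _ ⟨k, rfl⟩
  obtain ⟨i₀, hi₀⟩ := hdom k
  exact hb i₀ (u k) hi₀

section RealVectorLattice

variable {X : Type} [AddCommGroup X] [Module ℝ X] {a e x : X}

lemma posPart_sub_nsmul_inf_posPart_sub_eq_zero [Lattice X] [AddLeftMono X] {n : ℕ}
    (h : ((n : ℝ) + 1)⁻¹ • a ⊓ e ≤ x) : (a - (n + 1 : ℕ) • e)⁺ ⊓ (e - x)⁺ = 0 := by
  have ha : (n + 1 : ℕ) • (((n : ℝ) + 1)⁻¹ • a) = a := by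
    rw [← Nat.cast_smul_eq_nsmul ℝ, Nat.cast_succ, smul_inv_smul₀ (by positivity)]
  conv_lhs => rw [← ha, ← nsmul_sub]
  exact posPart_nsmul_inf_eq_zero (posPart_nonneg _) (posPart_sub_inf_posPart_sub_eq_zero h) _

variable [ConditionallyCompleteLattice X] {A : Set X}

/-- The inserted `0` keeps `sSup` meaningful when `A = ∅`. -/
noncomputable def scaledTruncSup (A : Set X) (e : X) (n : ℕ) : X :=
  sSup (insert 0 ((fun a => ((n : ℝ) + 1)⁻¹ • a ⊓ e) '' A))

lemma bddAbove_scaledTrunc (he : 0 ≤ e) (n : ℕ) :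
    BddAbove (insert 0 ((fun a => ((n : ℝ) + 1)⁻¹ • a ⊓ e) '' A)) :=
  ⟨e, by rintro _ (rfl | ⟨a, -, rfl⟩) <;> simp [he]⟩

lemma le_scaledTruncSup (he : 0 ≤ e) (ha : a ∈ A) (n : ℕ) :
    ((n : ℝ) + 1)⁻¹ • a ⊓ e ≤ scaledTruncSup A e n :=
  le_csSup (bddAbove_scaledTrunc he n) (mem_insert_of_mem _ ⟨a, ha, rfl⟩)

lemma scaledTruncSup_nonneg (he : 0 ≤ e) (n : ℕ) : 0 ≤ scaledTruncSup A e n :=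
  le_csSup (bddAbove_scaledTrunc he n) (mem_insert _ _)

variable [AddLeftMono X]

lemma isGLB_range_scaledTruncSup (he : 0 ≤ e)
    (huo : OConvZero (fun p : FstOrd ℕ ↥A =>
      |(((Prod.fst p : ℕ) : ℝ) + 1)⁻¹ • ((Prod.snd p : ↥A) : X)| ⊓ e)) :
    IsGLB (range (scaledTruncSup A e)) 0 := by
  refine ⟨by rintro _ ⟨n, rfl⟩; exact scaledTruncSup_nonneg he n, fun b hb => huo.le_zero ?_⟩
  intro i₀ t ht
  refine (hb ⟨i₀.1, rfl⟩).trans (csSup_le (insert_nonempty _ _) ?_)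
  rintro _ (rfl | ⟨a, ha, rfl⟩)
  · exact (abs_nonneg _).trans (ht i₀ le_rfl)
  calc ((i₀.1 : ℝ) + 1)⁻¹ • a ⊓ e ≤ |((i₀.1 : ℝ) + 1)⁻¹ • a| ⊓ e :=
        inf_le_inf_right e (le_abs_self _)
    _ ≤ |(|((i₀.1 : ℝ) + 1)⁻¹ • a| ⊓ e)| := le_abs_self _
    _ ≤ t := ht ((i₀.1, ⟨a, ha⟩) : FstOrd ℕ ↥A) (le_refl i₀.1)

variable [PosSMulMono ℝ X]

lemma scaledTruncSup_antitone (he : 0 ≤ e) (hA : ∀ a ∈ A, 0 ≤ a) :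
    Antitone (scaledTruncSup A e) := by
  intro m n hmn
  refine csSup_le (insert_nonempty _ _) ?_
  rintro _ (rfl | ⟨a, ha, rfl⟩)
  · exact scaledTruncSup_nonneg he m
  refine (inf_le_inf_right e ?_).trans (le_scaledTruncSup he ha m)
  have hc : ((n : ℝ) + 1)⁻¹ ≤ ((m : ℝ) + 1)⁻¹ := by gcongr
  exact sub_nonneg.1 (by rw [← sub_smul]; exact smul_nonneg (sub_nonneg.2 hc) (hA a ha))

end RealVectorLattice

/-- In a universally complete (order complete, weak unit, suprema of disjoint
positive families exist) vector lattice, every uo-bounded subset of the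
positive cone is order bounded. -/
theorem stmt15 {X : Type} [ConditionallyCompleteLattice X] [AddCommGroup X]
    [CovariantClass X X (· + ·) (· ≤ ·)] [Module ℝ X] [PosSMulMono ℝ X]
    (hdisj : ∀ D : Set X, (∀ d ∈ D, 0 ≤ d) →
      (∀ d₁ ∈ D, ∀ d₂ ∈ D, d₁ ≠ d₂ → d₁ ⊓ d₂ = 0) → ∃ s : X, IsLUB D s)
    (e : X) (he : 0 < e) (hweak : ∀ x : X, 0 ≤ x → x ⊓ e = 0 → x = 0)
    (A : Set X) (hA : ∀ a ∈ A, 0 ≤ a)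
    (huo : ∀ u : X, 0 ≤ u →
      OConvZero (fun p : FstOrd ℕ ↥A =>
        |(((Prod.fst p : ℕ) : ℝ) + 1)⁻¹ • ((Prod.snd p : ↥A) : X)| ⊓ u)) :
    ∃ h : X, 0 ≤ h ∧ ∀ a ∈ A, a ≤ h := by
  set x := scaledTruncSup A e
  have hP : Monotone fun n => bandComponent (e - x n)⁺ e := fun m n hmn =>
    bandComponent_mono (posPart_mono (sub_le_sub_left (scaledTruncSup_antitone he.le hA hmn) e))
  obtain ⟨h, hh, hbound⟩ := exists_bound_of_exhausting_components hdisj hweak hP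
    (fun n => isComponent_bandComponent (posPart_nonneg _) he.le)
    (isLUB_range_bandComponent he.le (isGLB_range_scaledTruncSup he.le (huo e he.le)))
  refine ⟨h, hh, fun a ha => hbound a fun n => ?_⟩
  exact inf_bandComponent_eq_zero (posPart_nonneg _) (posPart_nonneg _) he.le
    (posPart_sub_nsmul_inf_posPart_sub_eq_zero (le_scaledTruncSup he.le ha n))
end

section
/- Let X be a convergence space, B a bornology on X (a collection of subsets closed under subsets and finite unions, covering X), and define the bounded modification λ_B of a convergence λ by: a filter F →_{λ_B} x iff F →_λ x and F contains a member of B. If λ is a linear convergence on a vector space X and B is a linear bornology (closed under sums, nonzero scalar multiples, and circled hulls), then λ_B is a linear convergence: addition and scalar multiplication are continuous for λ_B. -/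
open Filter Pointwise

/-- A linear bornology on a vector space. -/
structure IsLinBornology {X : Type} [AddCommGroup X] [Module ℝ X]
    (B : Set (Set X)) : Prop where
  subset : ∀ S T : Set X, S ⊆ T → T ∈ B → S ∈ B
  union : ∀ S T : Set X, S ∈ B → T ∈ B → S ∪ T ∈ B
  covers : ∀ x : X, ∃ S ∈ B, x ∈ S
  add : ∀ S T : Set X, S ∈ B → T ∈ B → S + T ∈ B
  smul : ∀ (c : ℝ) (S : Set X), c ≠ 0 → S ∈ B → c • S ∈ B
  circled : ∀ S : Set X, S ∈ B → balancedHull ℝ S ∈ B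

/-- The bounded modification of a linear convergence by a linear bornology is
again a linear convergence: addition and scalar multiplication are continuous. -/
theorem stmt16 {X : Type} [AddCommGroup X] [Module ℝ X]
    (C : Conv X) (hC : IsLinearConv C)
    (B : Set (Set X)) (hB : IsLinBornology B) :
    (∀ (ι : Type) [Preorder ι] [IsDirected ι (· ≤ ·)] [Nonempty ι]
      (x y : ι → X) (a b : X),
      (C ι x a ∧ ∃ S ∈ B, ∃ i₀, ∀ i, i₀ ≤ i → x i ∈ S) →
      (C ι y b ∧ ∃ T ∈ B, ∃ i₀, ∀ i, i₀ ≤ i → y i ∈ T) →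
      (C ι (fun i => x i + y i) (a + b) ∧
        ∃ U ∈ B, ∃ i₀, ∀ i, i₀ ≤ i → x i + y i ∈ U)) ∧
    (∀ (ι : Type) [Preorder ι] [IsDirected ι (· ≤ ·)] [Nonempty ι]
      (r : ι → ℝ) (x : ι → X) (r₀ : ℝ) (a : X),
      Tendsto r atTop (nhds r₀) →
      (C ι x a ∧ ∃ S ∈ B, ∃ i₀, ∀ i, i₀ ≤ i → x i ∈ S) →
      (C ι (fun i => r i • x i) (r₀ • a) ∧
        ∃ U ∈ B, ∃ i₀, ∀ i, i₀ ≤ i → r i • x i ∈ U)) := by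

  constructor
  · intro ι _ _ _ x y a b ⟨hx, S, hS, i₀, hi₀⟩ ⟨hy, T, hT, j₀, hj₀⟩
    refine ⟨hC.add ι x y a b hx hy, S + T, hB.add S T hS hT, ?_⟩
    obtain ⟨k, hk1, hk2⟩ := directed_of (· ≤ ·) i₀ j₀
    exact ⟨k, fun i hi => Set.add_mem_add (hi₀ i (hk1.trans hi)) (hj₀ i (hk2.trans hi))⟩
  · intro ι _ _ _ r x r₀ a hr ⟨hx, S, hS, i₀, hi₀⟩
    refine ⟨hC.smul ι r x r₀ a hr hx, ?_⟩
    set c : ℝ := |r₀| + 1 with hc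
    have hcpos : (0:ℝ) < c := by positivity
    have hev : ∀ᶠ i in atTop, |r i| ≤ c := by
      have : ∀ᶠ t in nhds r₀, |t| ≤ c := by
        have : Set.Ioo (r₀ - 1) (r₀ + 1) ∈ nhds r₀ := Ioo_mem_nhds (by linarith) (by linarith)
        filter_upwards [this] with t ht
        rw [abs_le]
        constructor
        · cases abs_cases r₀ <;> [linarith [ht.1]; linarith [ht.1]]
        · cases abs_cases r₀ <;> [linarith [ht.2]; linarith [ht.2]]
      exact hr.eventually this
    obtain ⟨i₁, hi₁⟩ := eventually_atTop.1 hev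
    obtain ⟨k, hk1, hk2⟩ := directed_of (· ≤ ·) i₀ i₁
    refine ⟨c • balancedHull ℝ S, hB.smul c (balancedHull ℝ S) hcpos.ne' (hB.circled S hS), k, fun i hi => ?_⟩
    have hxS := hi₀ i (hk1.trans hi)
    have hri := hi₁ i (hk2.trans hi)
    have hmem : (c⁻¹ * r i) • x i ∈ balancedHull ℝ S := by
      rw [mem_balancedHull_iff]
      refine ⟨c⁻¹ * r i, ?_, Set.smul_mem_smul_set hxS⟩
      rw [Real.norm_eq_abs, abs_mul, abs_inv, abs_of_pos hcpos]
      rw [inv_mul_le_iff₀ hcpos, mul_one]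
      exact hri
    have : r i • x i = c • ((c⁻¹ * r i) • x i) := by
      rw [smul_smul, ← mul_assoc, mul_inv_cancel₀ hcpos.ne', one_mul]
    rw [this]
    exact Set.smul_mem_smul_set hmem
end

section
/- Let J be an ideal in a vector lattice X and let x ∈ X₊. For every e ∈ J₊ and every n ∈ ℕ, the inequality (x − x ∧ ne) ∧ e ≤ (1/n)·x holds. -/
open Filter Pointwise

section Aux
variable {X : Type} [AddCommGroup X] [Lattice X]
    [CovariantClass X X (· + ·) (· ≤ ·)]

lemma riesz_inf_add {a b c : X} (ha : 0 ≤ a) (hb : 0 ≤ b) (hc : 0 ≤ c) :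
    (a + b) ⊓ c ≤ a ⊓ c + (b ⊓ c) := by
  have h : a ⊓ c + b ⊓ c = ((a + b) ⊓ (a + c)) ⊓ ((c + b) ⊓ (c + c)) := by
    rw [inf_add, add_inf, add_inf]
  rw [h]
  refine le_inf (le_inf inf_le_left ?_) (le_inf ?_ ?_)
  · exact le_trans inf_le_right (le_add_of_nonneg_left ha)
  · exact le_trans inf_le_right (le_add_of_nonneg_right hb)
  · exact le_trans inf_le_right (le_add_of_nonneg_left hc)

lemma disjoint_nsmul {u v : X} (hu : 0 ≤ u) (hv : 0 ≤ v)
    (h : u ⊓ v = 0) : ∀ n : ℕ, (n • u) ⊓ v = 0 := by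
  intro n
  induction n with
  | zero => rw [zero_nsmul]; exact inf_eq_left.2 hv
  | succ k ih =>
    have h1 : ((k+1) • u) ⊓ v ≤ k • u ⊓ v + (u ⊓ v) := by
      have := riesz_inf_add (a := k • u) (b := u) (c := v) (nsmul_nonneg hu k) hu hv
      simpa [succ_nsmul] using this
    have h2 : ((k+1) • u) ⊓ v ≤ 0 := by rw [ih, h] at h1; simpa using h1
    exact le_antisymm h2 (le_inf (nsmul_nonneg hu (k+1)) hv)

end Aux

/-- For an ideal `J` of a vector lattice, `x ≥ 0`, `e ∈ J₊` and `n ≥ 1`, one has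
`(x - x ⊓ n•e) ⊓ e ≤ (1/n) • x`. -/
theorem stmt17 {X : Type} [AddCommGroup X] [Lattice X]
    [CovariantClass X X (· + ·) (· ≤ ·)] [Module ℝ X] [PosSMulMono ℝ X]
    (J : Set X) (hJ0 : (0 : X) ∈ J)
    (hJadd : ∀ v ∈ J, ∀ w ∈ J, v + w ∈ J)
    (hJsmul : ∀ (c : ℝ), ∀ v ∈ J, c • v ∈ J)
    (hJsolid : ∀ u v : X, |u| ≤ |v| → v ∈ J → u ∈ J)
    (x e : X) (hx : 0 ≤ x) (he : 0 ≤ e) (heJ : e ∈ J)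
    (n : ℕ) (hn : 0 < n) :
    (x - x ⊓ (n • e)) ⊓ e ≤ ((n : ℝ))⁻¹ • x := by
  set a := x - n • e with ha
  have hrw : x - x ⊓ (n • e) = a⁺ := by
    rw [sub_inf, sub_self, posPart_def, ha, sup_comm]
  rw [hrw]
  set y := a⁺ ⊓ e with hy
  have hy0 : 0 ≤ y := le_inf (posPart_nonneg a) he
  have hye : y ≤ e := inf_le_right
  have hya : y ≤ a⁺ := inf_le_left
  -- key : n • y ≤ x
  have hkey : (n : ℕ) • y ≤ x := by
    have h1 : (n • y - x)⁺ ≤ n • a⁺ := by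
      refine sup_le ?_ (nsmul_nonneg (posPart_nonneg a) n)
      calc n • y - x ≤ n • y := sub_le_self _ hx
        _ ≤ n • a⁺ := nsmul_le_nsmul_right hya n
    have h2 : (n • y - x)⁺ ≤ a⁻ := by
      refine sup_le ?_ (negPart_nonneg a)
      calc n • y - x ≤ n • e - x := sub_le_sub_right (nsmul_le_nsmul_right hye n) x
        _ = -a := by rw [ha]; abel
        _ ≤ a⁻ := neg_le_negPart a
    have h3 : (n • y - x)⁺ ≤ (n • a⁺) ⊓ a⁻ := le_inf h1 h2
    rw [disjoint_nsmul (posPart_nonneg a) (negPart_nonneg a)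
      (posPart_inf_negPart_eq_zero a) n] at h3
    have h4 : (n • y - x)⁺ = 0 :=
      le_antisymm h3 (le_sup_right)
    exact sub_nonpos.mp (posPart_eq_zero.mp h4)
  -- scale by n⁻¹
  have hns : ((n : ℝ))⁻¹ • ((n : ℕ) • y) ≤ ((n : ℝ))⁻¹ • x :=
    smul_le_smul_of_nonneg_left hkey (by positivity)
  have hcast : ((n : ℝ))⁻¹ • ((n : ℕ) • y) = y := by
    rw [← Nat.cast_smul_eq_nsmul ℝ n y, smul_smul,
      inv_mul_cancel₀ (by exact_mod_cast hn.ne' : (n:ℝ) ≠ 0), one_smul]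
  rwa [hcast] at hns
end

section
/- Let X be a vector lattice with a Hausdorff locally solid convergence structure λ satisfying λ ≤ uo (every uo-convergent net λ-converges to the same limit), and suppose X is λ-complete (every λ-Cauchy net λ-converges). Then X is uo-complete: every uo-Cauchy net converges in uo. -/
open Filter Pointwise

instance prodDirected {ι : Type} [Preorder ι] [IsDirected ι (· ≤ ·)] :
    IsDirected (ι × ι) (· ≤ ·) :=
  ⟨fun p q => by
    obtain ⟨c, h1, h2⟩ := directed_of (· ≤ · : ι → ι → Prop) p.1 q.1
    obtain ⟨d, h3, h4⟩ := directed_of (· ≤ · : ι → ι → Prop) p.2 q.2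
    exact ⟨(c, d), ⟨h1, h3⟩, ⟨h2, h4⟩⟩⟩

section Aux

variable {X : Type} [AddCommGroup X] [Lattice X]
    [CovariantClass X X (· + ·) (· ≤ ·)] [Module ℝ X] [PosSMulMono ℝ X]
    {C : Conv X}

/-- Translation continuity: subtracting a constant. -/
lemma aux_sub_const (hC : IsLinearConv C) {ι : Type} [Preorder ι]
    [IsDirected ι (· ≤ ·)] [Nonempty ι] {y : ι → X} {b : X} (h : C ι y b) (c : X) :
    C ι (fun j => y j - c) (b - c) := by
  have := hC.add ι y (fun _ => -c) b (-c) h (hC.toIsConvStruct.const ι (-c))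
  simpa [sub_eq_add_neg] using this

/-- The positive cone is closed: an eventually-nonnegative convergent net has
nonnegative limit. -/
lemma aux_cone (hC : IsLinearConv C) (hsolid : LocSolid C) (hH : ConvHausdorff C)
    {ι : Type} [Preorder ι] [IsDirected ι (· ≤ ·)] [Nonempty ι]
    {z : ι → X} {c : X} (h : C ι z c)
    (hpos : ∃ j₀ : ι, ∀ j, j₀ ≤ j → 0 ≤ z j) : 0 ≤ c := by
  obtain ⟨j₀, hj₀⟩ := hpos
  have h0 : C ι (fun j => z j - c) 0 := by
    simpa using aux_sub_const hC h c
  have hneg0 : C ι (fun j => negPart (z j) - negPart c) 0 := by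
    refine hsolid ι (fun j => z j - c) _ (fun j => ?_) h0
    have h1 : |negPart (z j) - negPart c| ≤ |z j - c| := by
      rw [negPart_def, negPart_def]
      calc |(-z j ⊔ 0) - (-c ⊔ 0)| ≤ |(-z j) - (-c)| := abs_sup_sub_sup_le_abs _ _ _
        _ = |z j - c| := by rw [neg_sub_neg, abs_sub_comm]
    exact h1
  have hnegc : C ι (fun j => negPart (z j)) (negPart c) := by
    have := hC.add ι (fun j => negPart (z j) - negPart c) (fun _ => negPart c) 0 (negPart c)
      hneg0 (hC.toIsConvStruct.const ι (negPart c))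
    simpa using this
  have hzero : C ι (fun j => negPart (z j)) 0 := by
    refine hC.toIsConvStruct.quasi ι ι (fun _ => (0 : X)) (fun j => negPart (z j)) 0
      (hC.toIsConvStruct.const ι 0) ?_
    intro i₀
    refine ⟨j₀, fun k hk => ⟨i₀, le_refl _, ?_⟩⟩
    exact negPart_eq_zero.2 (hj₀ k hk)
  have : negPart c = 0 := hH ι _ _ _ hnegc hzero
  have hd := posPart_sub_negPart c
  rw [this, sub_zero] at hd
  rw [← hd]
  exact posPart_nonneg c

/-- Continuity of `j ↦ |x₀ - y j| ⊓ u`. -/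
lemma aux_inf (hC : IsLinearConv C) (hsolid : LocSolid C)
    {ι : Type} [Preorder ι] [IsDirected ι (· ≤ ·)] [Nonempty ι]
    {y : ι → X} {b : X} (h : C ι y b) (x₀ u : X) :
    C ι (fun j => |x₀ - y j| ⊓ u) (|x₀ - b| ⊓ u) := by
  have h0 : C ι (fun j => y j - b) 0 := by simpa using aux_sub_const hC h b
  have hs : C ι (fun j => (|x₀ - y j| ⊓ u) - (|x₀ - b| ⊓ u)) 0 := by
    refine hsolid ι (fun j => y j - b) _ (fun j => ?_) h0
    have h1 : |(|x₀ - y j| ⊓ u) - (|x₀ - b| ⊓ u)| ≤ |y j - b| := by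
      calc |(|x₀ - y j| ⊓ u) - (|x₀ - b| ⊓ u)| ≤ abs (|x₀ - y j| - |x₀ - b|) :=
            abs_inf_sub_inf_le_abs _ _ _
        _ ≤ |(x₀ - y j) - (x₀ - b)| := abs_abs_sub_abs_le _ _
        _ = |y j - b| := by rw [sub_sub_sub_cancel_left, abs_sub_comm]
    exact h1
  have := hC.add ι _ (fun _ => |x₀ - b| ⊓ u) 0 (|x₀ - b| ⊓ u) hs
    (hC.toIsConvStruct.const ι (|x₀ - b| ⊓ u))
  simpa using this

end Aux

/-- If a Hausdorff locally solid convergence `λ` is weaker than uo-convergence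
and `X` is `λ`-complete, then `X` is uo-complete. -/
theorem stmt19 {X : Type} [AddCommGroup X] [Lattice X]
    [CovariantClass X X (· + ·) (· ≤ ·)] [Module ℝ X] [PosSMulMono ℝ X]
    (C : Conv X) (hC : IsLinearConv C) (hsolid : LocSolid C) (hH : ConvHausdorff C)
    (hle : ∀ (ι : Type) [Preorder ι] [IsDirected ι (· ≤ ·)] [Nonempty ι]
      (x : ι → X) (a : X),
      (∀ u : X, 0 ≤ u → OConvZero (fun i => |x i - a| ⊓ u)) → C ι x a)
    (hcomplete : ∀ (ι : Type) [Preorder ι] [IsDirected ι (· ≤ ·)] [Nonempty ι]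
      (x : ι → X), C (ι × ι) (fun p => x p.1 - x p.2) 0 → ∃ a : X, C ι x a)
    (ι : Type) [Preorder ι] [IsDirected ι (· ≤ ·)] [Nonempty ι] (x : ι → X)
    (hcauchy : ∀ u : X, 0 ≤ u →
      OConvZero (fun p : ι × ι => |x p.1 - x p.2| ⊓ u)) :
    ∃ a : X, ∀ u : X, 0 ≤ u → OConvZero (fun i => |x i - a| ⊓ u) := by
  have hCauchyC : C (ι × ι) (fun p => x p.1 - x p.2) 0 := by
    apply hle
    intro u hu
    simpa using hcauchy u hu
  obtain ⟨a, ha⟩ := hcomplete ι x hCauchyC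
  refine ⟨a, fun u hu => ?_⟩
  obtain ⟨κ, hκ1, hκ2, hκ3, v, hanti, hglb, hbound⟩ := hcauchy u hu
  refine ⟨κ, hκ1, hκ2, hκ3, v, hanti, hglb, fun k => ?_⟩
  obtain ⟨p₀, hp₀⟩ := hbound k
  obtain ⟨i₁, h1, h2⟩ := directed_of (· ≤ · : ι → ι → Prop) p₀.1 p₀.2
  refine ⟨i₁, fun i hi => ?_⟩
  -- the net j ↦ v k - (|x i - x j| ⊓ u) is eventually ≥ 0 and converges to
  -- v k - (|x i - a| ⊓ u)
  have hconv : C ι (fun j => v k - (|x i - x j| ⊓ u)) (v k - (|x i - a| ⊓ u)) := by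
    have hinf := aux_inf hC hsolid ha (x i) u
    have hmin : C ι (fun j => -(|x i - x j| ⊓ u)) (-(|x i - a| ⊓ u)) := by
      have := hC.smul ι (fun _ => (-1 : ℝ)) _ (-1) _ tendsto_const_nhds hinf
      simpa [neg_one_smul] using this
    have := hC.add ι (fun _ => v k) _ (v k) _ (hC.toIsConvStruct.const ι (v k)) hmin
    simpa [sub_eq_add_neg] using this
  have hnn : 0 ≤ v k - (|x i - a| ⊓ u) := by
    refine aux_cone hC hsolid hH hconv ⟨i₁, fun j hj => ?_⟩
    have hb := hp₀ (i, j) ⟨le_trans h1 hi, le_trans h2 hj⟩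
    rw [abs_of_nonneg (le_inf (abs_nonneg _) hu)] at hb
    simpa [sub_nonneg] using hb
  rw [abs_of_nonneg (le_inf (abs_nonneg _) hu)]
  simpa [sub_nonneg] using hnn
end
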